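/- arXiv:2411.13707 — 2 statements merged into one kernel-verified Lean document; each statement's English description precedes it below -/
import Mathlib

section
/- If x ∈ T((V)) is grouplike, i.e. Δx = x ⊗ x and its degree-zero part equals 1, then the Eulerian idempotent applied to (each finite truncation of) x equals the tensor logarithm: e(x) = log(x) = Σ_{n≥1} ((−1)^{n−1}/n)(x − 1)^{⊗n}. -/
open TensorProduct

variable {V : Type*} [AddCommGroup V] [Module ℝ V]

/-- The unshuffle coproduct on the tensor algebra. -/
noncomputable def unshuffle :
    TensorAlgebra ℝ V →ₐ[ℝ] TensorAlgebra ℝ V ⊗[ℝ] TensorAlgebra ℝ V :=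
  TensorAlgebra.lift ℝ
    ((Algebra.TensorProduct.includeLeft :
        TensorAlgebra ℝ V →ₐ[ℝ] TensorAlgebra ℝ V ⊗[ℝ] TensorAlgebra ℝ V).toLinearMap
        ∘ₗ TensorAlgebra.ι ℝ
      + (Algebra.TensorProduct.includeRight :
        TensorAlgebra ℝ V →ₐ[ℝ] TensorAlgebra ℝ V ⊗[ℝ] TensorAlgebra ℝ V).toLinearMap
        ∘ₗ TensorAlgebra.ι ℝ)

/-- Convolution product f ⋆ g := m ∘ (f ⊗ g) ∘ Δ on End(T(V)). -/
noncomputable def conv (f g : TensorAlgebra ℝ V →ₗ[ℝ] TensorAlgebra ℝ V) :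
    TensorAlgebra ℝ V →ₗ[ℝ] TensorAlgebra ℝ V :=
  LinearMap.mul' ℝ (TensorAlgebra ℝ V) ∘ₗ TensorProduct.map f g ∘ₗ
    (unshuffle (V := V)).toLinearMap

/-- The counit of T(V). -/
noncomputable def counit : TensorAlgebra ℝ V →ₐ[ℝ] ℝ :=
  TensorAlgebra.lift ℝ (0 : V →ₗ[ℝ] ℝ)

/-- `π₀`: projection onto the degree-zero component `V^{⊗0}`, the unit of `⋆`. -/
noncomputable def piZero : TensorAlgebra ℝ V →ₗ[ℝ] TensorAlgebra ℝ V :=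
  Algebra.linearMap ℝ (TensorAlgebra ℝ V) ∘ₗ (counit (V := V)).toLinearMap

/-- Convolution powers `f^{⋆n}` (with `f^{⋆0} = π₀`, the convolution unit). -/
noncomputable def convPow (f : TensorAlgebra ℝ V →ₗ[ℝ] TensorAlgebra ℝ V) :
    ℕ → (TensorAlgebra ℝ V →ₗ[ℝ] TensorAlgebra ℝ V)
  | 0 => piZero
  | n + 1 => conv f (convPow f n)

/-- The Eulerian idempotent `e = log_⋆(id) = Σ_{n≥1} ((−1)^{n−1}/n) (id − π₀)^{⋆n}`,
as a function on T(V) (the sum is finite on each element by conilpotency). -/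
noncomputable def eul (x : TensorAlgebra ℝ V) : TensorAlgebra ℝ V :=
  ∑ᶠ n : ℕ, ((-1 : ℝ) ^ n / (n + 1)) • convPow (LinearMap.id - piZero) (n + 1) x

lemma counit_ι (v : V) : counit (TensorAlgebra.ι ℝ v) = 0 := by
  simp [counit]

lemma counit_of_mem_pow {n : ℕ} (hn : n ≠ 0) {a : TensorAlgebra ℝ V}
    (ha : a ∈ (LinearMap.range (TensorAlgebra.ι ℝ : V →ₗ[ℝ] TensorAlgebra ℝ V)) ^ n) :
    counit a = 0 := by
  obtain ⟨m, rfl⟩ := Nat.exists_eq_succ_of_ne_zero hn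
  rw [pow_succ] at ha
  refine Submodule.mul_induction_on ha ?_ ?_
  · rintro b hb c ⟨v, rfl⟩
    rw [map_mul, counit_ι, mul_zero]
  · intro y z hy hz; rw [map_add, hy, hz, add_zero]

lemma range_succ_eq_insert (n : ℕ) :
    Finset.range (n + 1) = insert 0 (Finset.Icc 1 n) := by
  ext p; simp [Nat.lt_succ_iff, Nat.one_le_iff_ne_zero]; omega

lemma conv_apply_of_grouplike (x : ℕ → TensorAlgebra ℝ V) (n : ℕ)
    (hgrp : unshuffle (x n) = ∑ p ∈ Finset.range (n + 1), x p ⊗ₜ[ℝ] x (n - p))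
    (f g : TensorAlgebra ℝ V →ₗ[ℝ] TensorAlgebra ℝ V) :
    conv f g (x n) = ∑ p ∈ Finset.range (n + 1), f (x p) * g (x (n - p)) := by
  simp only [conv, LinearMap.coe_comp, Function.comp_apply, AlgHom.toLinearMap_apply, hgrp,
    map_sum, TensorProduct.map_tmul, LinearMap.mul'_apply]

/-- If x ∈ T((V)) = ∏ₙ V^{⊗n} is grouplike (Δx = x ⊗ x, degree-zero part 1) — encoded
here by its graded components x n ∈ V^{⊗n}, with x 0 = 1 and
Δ(xₙ) = Σ_{p+q=n} x_p ⊗ x_q — then the Eulerian idempotent applied to (each finite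
truncation of) x equals the tensor logarithm log(x) = Σ_{k≥1} ((−1)^{k−1}/k)(x−1)^{⊗k}:
in each degree n, e(xₙ) is the degree-n component of the logarithm of the truncation
y = Σ_{m≤n} x m. -/
theorem eulerian_of_grouplike_eq_log [FiniteDimensional ℝ V]
    (x : ℕ → TensorAlgebra ℝ V)
    (hdeg : ∀ n, x n ∈ (LinearMap.range (TensorAlgebra.ι ℝ : V →ₗ[ℝ] TensorAlgebra ℝ V)) ^ n)
    (h0 : x 0 = 1)
    (hgrp : ∀ n, unshuffle (x n)
      = ∑ p ∈ Finset.range (n + 1), x p ⊗ₜ[ℝ] x (n - p)) :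
    ∀ n : ℕ, eul (x n) =
      GradedAlgebra.proj
        ((LinearMap.range (TensorAlgebra.ι ℝ : V →ₗ[ℝ] TensorAlgebra ℝ V) ^ ·)) n
        (∑ k ∈ Finset.Icc 1 n, ((-1 : ℝ) ^ (k - 1) / k) •
          ((∑ m ∈ Finset.range (n + 1), x m) - 1) ^ k) := by
  classical
  set 𝒜 : ℕ → Submodule ℝ (TensorAlgebra ℝ V) :=
    ((LinearMap.range (TensorAlgebra.ι ℝ : V →ₗ[ℝ] TensorAlgebra ℝ V) ^ ·)) with h𝒜
  set fm : TensorAlgebra ℝ V →ₗ[ℝ] TensorAlgebra ℝ V := LinearMap.id - piZero with hfm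
  have hpi : ∀ m, piZero (x m) = if m = 0 then 1 else 0 := by
    intro m
    rcases Nat.eq_zero_or_pos m with hm | hm
    · subst hm
      simp [piZero, h0]
    · have h := counit_of_mem_pow hm.ne' (hdeg m)
      simp [piZero, hm.ne', h]
  have hfm0 : fm (x 0) = 0 := by
    have hp : piZero (x 0) = 1 := by rw [hpi]; simp
    rw [hfm, LinearMap.sub_apply, LinearMap.id_apply, hp, h0, sub_self]
  have hfmp : ∀ p, p ≠ 0 → fm (x p) = x p := by
    intro p hp
    simp [hfm, LinearMap.sub_apply, hpi, hp]
  -- convolution against `fm` as a sum over Icc 1 n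
  have hconv : ∀ (g : TensorAlgebra ℝ V →ₗ[ℝ] TensorAlgebra ℝ V) (N : ℕ),
      conv fm g (x N) = ∑ p ∈ Finset.Icc 1 N, x p * g (x (N - p)) := by
    intro g N
    rw [conv_apply_of_grouplike x N (hgrp N), range_succ_eq_insert,
      Finset.sum_insert (by simp), hfm0, zero_mul, zero_add]
    refine Finset.sum_congr rfl fun p hp => ?_
    rw [hfmp p (by simp at hp; omega)]
  have hvanish : ∀ k N, N < k → convPow fm k (x N) = 0 := by
    intro k
    induction k with
    | zero => omega
    | succ k ih =>
      intro N hN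
      show conv fm (convPow fm k) (x N) = 0
      rw [hconv]
      refine Finset.sum_eq_zero fun p hp => ?_
      simp only [Finset.mem_Icc] at hp
      rw [ih (N - p) (by omega), mul_zero]
  have hproj : ∀ (n : ℕ) (k : ℕ), ∀ j ≤ n,
      GradedAlgebra.proj 𝒜 j ((∑ m ∈ Finset.Icc 1 n, x m) ^ k) = convPow fm k (x j) := by
    intro n k
    induction k with
    | zero =>
      intro j hj
      show _ = piZero (x j)
      rw [pow_zero, hpi, GradedAlgebra.proj_apply]
      rcases eq_or_ne j 0 with rfl | hj0
      · rw [if_pos rfl, DirectSum.decompose_of_mem_same 𝒜 (SetLike.one_mem_graded 𝒜)]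
      · rw [if_neg hj0,
          DirectSum.decompose_of_mem_ne 𝒜 (SetLike.one_mem_graded 𝒜) (Ne.symm hj0)]
    | succ k ih =>
      intro j hj
      show _ = conv fm (convPow fm k) (x j)
      rw [pow_succ', Finset.sum_mul, map_sum, hconv]
      have key : ∀ m ∈ Finset.Icc 1 n,
          GradedAlgebra.proj 𝒜 j (x m * (∑ m ∈ Finset.Icc 1 n, x m) ^ k)
            = if m ≤ j then x m * convPow fm k (x (j - m)) else 0 := by
        intro m hm
        rw [GradedAlgebra.proj_apply]
        rcases le_or_gt m j with hmj | hmj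
        · rw [if_pos hmj,
            DirectSum.coe_decompose_mul_of_left_mem_of_le 𝒜 (hdeg m) hmj,
            ← GradedAlgebra.proj_apply, ih (j - m) (by omega)]
        · rw [if_neg (not_le.mpr hmj),
            DirectSum.coe_decompose_mul_of_left_mem_of_not_le 𝒜 (hdeg m) (not_le.mpr hmj)]
      rw [Finset.sum_congr rfl key]
      rw [Finset.sum_ite, Finset.sum_const_zero, add_zero]
      refine Finset.sum_congr ?_ fun p _ => rfl
      ext p
      simp only [Finset.mem_filter, Finset.mem_Icc]
      omega
  intro n
  have hw : (∑ m ∈ Finset.range (n + 1), x m) - 1 = ∑ m ∈ Finset.Icc 1 n, x m := by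
    rw [range_succ_eq_insert, Finset.sum_insert (by simp), h0, add_sub_cancel_left]
  have hsupp : (Function.support fun k : ℕ =>
      ((-1 : ℝ) ^ k / (k + 1)) • convPow fm (k + 1) (x n)) ⊆ ↑(Finset.range n) := by
    intro k hk
    simp only [Finset.coe_range, Set.mem_Iio]
    by_contra h
    push_neg at h
    apply hk
    dsimp only
    rw [hvanish (k + 1) n (by omega), smul_zero]
  rw [eul, finsum_eq_sum_of_support_subset _ hsupp, hw, map_sum]
  have hterm : ∀ k ∈ Finset.Icc 1 n,
      GradedAlgebra.proj 𝒜 n (((-1 : ℝ) ^ (k - 1) / k) • (∑ m ∈ Finset.Icc 1 n, x m) ^ k)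
        = ((-1 : ℝ) ^ (k - 1) / k) • convPow fm k (x n) := by
    intro k hk
    rw [map_smul, hproj n k n le_rfl]
  rw [Finset.sum_congr rfl hterm]
  refine Finset.sum_nbij' (fun i => i + 1) (fun k => k - 1) ?_ ?_ ?_ ?_ ?_
  · intro i hi; simp only [Finset.mem_range] at hi; simp only [Finset.mem_Icc]; omega
  · intro k hk; simp only [Finset.mem_Icc] at hk; simp only [Finset.mem_range]; omega
  · intro i hi; omega
  · intro k hk; simp only [Finset.mem_Icc] at hk; omega
  · intro i hi
    have h1 : i + 1 - 1 = i := by omega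
    rw [h1]
    push_cast
    ring_nf
end

section
/- For any four letters i, j, k, l, the Eulerian idempotent on the length-4 word satisfies e(εᵢεⱼε_kε_l) = (1/12)([εᵢ,[[εⱼ,ε_k],ε_l]] + [[εᵢ,εⱼ],[ε_k,ε_l]] + [[εᵢ,ε_k],[εⱼ,ε_l]] + [[εᵢ,[εⱼ,ε_k]],ε_l]). -/
open TensorProduct

variable {V : Type*} [AddCommGroup V] [Module ℝ V]

section Aux
variable {V : Type*} [AddCommGroup V] [Module ℝ V]

local notation "ι" => TensorAlgebra.ι ℝ
local notation "Q" => (LinearMap.id - piZero : TensorAlgebra ℝ V →ₗ[ℝ] TensorAlgebra ℝ V)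

lemma counit_ι_s16 (a : V) : counit (ι a) = 0 := by
  simp [counit]

lemma piZero_one : piZero (1 : TensorAlgebra ℝ V) = 1 := by
  simp [piZero]

lemma piZero_ι (a : V) : piZero (ι a) = 0 := by
  simp [piZero, counit_ι_s16]

lemma piZero_mul_ι (x : TensorAlgebra ℝ V) (a : V) : piZero (x * ι a) = 0 := by
  simp [piZero, map_mul, counit_ι_s16]

lemma q_one : Q (1 : TensorAlgebra ℝ V) = 0 := by
  simp [piZero_one]

lemma q_ι (a : V) : Q (ι a) = ι a := by
  simp [piZero_ι]

lemma q_mul_ι (x : TensorAlgebra ℝ V) (a : V) : Q (x * ι a) = x * ι a := by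
  simp [piZero_mul_ι]

lemma unshuffle_ι (a : V) :
    unshuffle (ι a) = ι a ⊗ₜ[ℝ] 1 + 1 ⊗ₜ[ℝ] ι a := by
  simp [unshuffle]

lemma unshuffle_w2 (a b : V) : unshuffle (ι a * ι b) =
    (ι a * ι b) ⊗ₜ[ℝ] 1 + ι a ⊗ₜ[ℝ] ι b + ι b ⊗ₜ[ℝ] ι a + 1 ⊗ₜ[ℝ] (ι a * ι b) := by
  rw [map_mul, unshuffle_ι, unshuffle_ι]
  simp only [mul_add, add_mul, Algebra.TensorProduct.tmul_mul_tmul, one_mul, mul_one]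
  abel

lemma unshuffle_w3 (a b c : V) : unshuffle (ι a * ι b * ι c) =
    (ι a * ι b * ι c) ⊗ₜ[ℝ] 1
      + (ι a * ι b) ⊗ₜ[ℝ] ι c + (ι a * ι c) ⊗ₜ[ℝ] ι b + (ι b * ι c) ⊗ₜ[ℝ] ι a
      + ι a ⊗ₜ[ℝ] (ι b * ι c) + ι b ⊗ₜ[ℝ] (ι a * ι c) + ι c ⊗ₜ[ℝ] (ι a * ι b)
      + 1 ⊗ₜ[ℝ] (ι a * ι b * ι c) := by
  rw [map_mul, unshuffle_w2, unshuffle_ι]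
  simp only [mul_add, add_mul, Algebra.TensorProduct.tmul_mul_tmul, one_mul, mul_one]
  abel

lemma unshuffle_w4 (a b c d : V) : unshuffle (ι a * ι b * ι c * ι d) =
    (ι a * ι b * ι c * ι d) ⊗ₜ[ℝ] 1
      + (ι a * ι b * ι c) ⊗ₜ[ℝ] ι d + (ι a * ι b * ι d) ⊗ₜ[ℝ] ι c
      + (ι a * ι c * ι d) ⊗ₜ[ℝ] ι b + (ι b * ι c * ι d) ⊗ₜ[ℝ] ι a
      + (ι a * ι b) ⊗ₜ[ℝ] (ι c * ι d) + (ι a * ι c) ⊗ₜ[ℝ] (ι b * ι d)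
      + (ι a * ι d) ⊗ₜ[ℝ] (ι b * ι c) + (ι b * ι c) ⊗ₜ[ℝ] (ι a * ι d)
      + (ι b * ι d) ⊗ₜ[ℝ] (ι a * ι c) + (ι c * ι d) ⊗ₜ[ℝ] (ι a * ι b)
      + ι a ⊗ₜ[ℝ] (ι b * ι c * ι d) + ι b ⊗ₜ[ℝ] (ι a * ι c * ι d)
      + ι c ⊗ₜ[ℝ] (ι a * ι b * ι d) + ι d ⊗ₜ[ℝ] (ι a * ι b * ι c)
      + 1 ⊗ₜ[ℝ] (ι a * ι b * ι c * ι d) := by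
  rw [map_mul, unshuffle_w3, unshuffle_ι]
  simp only [mul_add, add_mul, Algebra.TensorProduct.tmul_mul_tmul, one_mul, mul_one]
  abel

variable (f g : TensorAlgebra ℝ V →ₗ[ℝ] TensorAlgebra ℝ V)

lemma conv_one : conv f g (1 : TensorAlgebra ℝ V) = f 1 * g 1 := by
  simp [conv, Algebra.TensorProduct.one_def]

lemma conv_ι (a : V) : conv f g (ι a) = f (ι a) * g 1 + f 1 * g (ι a) := by
  simp [conv, unshuffle_ι]

lemma conv_w2 (a b : V) : conv f g (ι a * ι b) =
    f (ι a * ι b) * g 1 + f (ι a) * g (ι b) + f (ι b) * g (ι a)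
      + f 1 * g (ι a * ι b) := by
  simp [conv, unshuffle_w2]

lemma conv_w3 (a b c : V) : conv f g (ι a * ι b * ι c) =
    f (ι a * ι b * ι c) * g 1
      + f (ι a * ι b) * g (ι c) + f (ι a * ι c) * g (ι b) + f (ι b * ι c) * g (ι a)
      + f (ι a) * g (ι b * ι c) + f (ι b) * g (ι a * ι c) + f (ι c) * g (ι a * ι b)
      + f 1 * g (ι a * ι b * ι c) := by
  simp [conv, unshuffle_w3]

lemma conv_w4 (a b c d : V) : conv f g (ι a * ι b * ι c * ι d) =
    f (ι a * ι b * ι c * ι d) * g 1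
      + f (ι a * ι b * ι c) * g (ι d) + f (ι a * ι b * ι d) * g (ι c)
      + f (ι a * ι c * ι d) * g (ι b) + f (ι b * ι c * ι d) * g (ι a)
      + f (ι a * ι b) * g (ι c * ι d) + f (ι a * ι c) * g (ι b * ι d)
      + f (ι a * ι d) * g (ι b * ι c) + f (ι b * ι c) * g (ι a * ι d)
      + f (ι b * ι d) * g (ι a * ι c) + f (ι c * ι d) * g (ι a * ι b)
      + f (ι a) * g (ι b * ι c * ι d) + f (ι b) * g (ι a * ι c * ι d)
      + f (ι c) * g (ι a * ι b * ι d) + f (ι d) * g (ι a * ι b * ι c)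
      + f 1 * g (ι a * ι b * ι c * ι d) := by
  simp [conv, unshuffle_w4]

set_option maxHeartbeats 1000000

lemma convPow_succ (n : ℕ) : convPow f (n+1) = conv f (convPow f n) := rfl

variable (a b c d : V)

-- evaluation simp set for Q = id - piZero
-- values of convPow Q 1
lemma cp1_one : convPow Q 1 (1 : TensorAlgebra ℝ V) = 0 := by
  show conv Q piZero (1 : TensorAlgebra ℝ V) = 0
  simp only [LinearMap.sub_apply, LinearMap.id_apply, piZero_one, piZero_ι, piZero_mul_ι, sub_zero, sub_self, mul_zero, zero_mul, add_zero, zero_add, mul_one, one_mul, mul_add, add_mul, conv_one]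
lemma cp1_ι : convPow Q 1 (ι a) = ι a := by
  show conv Q piZero (ι a) = ι a
  simp only [LinearMap.sub_apply, LinearMap.id_apply, piZero_one, piZero_ι, piZero_mul_ι, sub_zero, sub_self, mul_zero, zero_mul, add_zero, zero_add, mul_one, one_mul, mul_add, add_mul, conv_ι]
lemma cp1_w2 : convPow Q 1 (ι a * ι b) = ι a * ι b := by
  show conv Q piZero _ = _
  simp only [LinearMap.sub_apply, LinearMap.id_apply, piZero_one, piZero_ι, piZero_mul_ι, sub_zero, sub_self, mul_zero, zero_mul, add_zero, zero_add, mul_one, one_mul, mul_add, add_mul, conv_w2]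
lemma cp1_w3 : convPow Q 1 (ι a * ι b * ι c) = ι a * ι b * ι c := by
  show conv Q piZero _ = _
  simp only [LinearMap.sub_apply, LinearMap.id_apply, piZero_one, piZero_ι, piZero_mul_ι, sub_zero, sub_self, mul_zero, zero_mul, add_zero, zero_add, mul_one, one_mul, mul_add, add_mul, conv_w3]
lemma cp1_w4 : convPow Q 1 (ι a * ι b * ι c * ι d) = ι a * ι b * ι c * ι d := by
  show conv Q piZero _ = _
  simp only [LinearMap.sub_apply, LinearMap.id_apply, piZero_one, piZero_ι, piZero_mul_ι, sub_zero, sub_self, mul_zero, zero_mul, add_zero, zero_add, mul_one, one_mul, mul_add, add_mul, conv_w4]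

-- values of convPow Q 2
lemma cp2_one : convPow Q 2 (1 : TensorAlgebra ℝ V) = 0 := by
  show conv Q (convPow Q 1) (1 : TensorAlgebra ℝ V) = 0
  simp only [LinearMap.sub_apply, LinearMap.id_apply, piZero_one, piZero_ι, piZero_mul_ι, sub_zero, sub_self, mul_zero, zero_mul, add_zero, zero_add, mul_one, one_mul, mul_add, add_mul, conv_one]
lemma cp2_ι : convPow Q 2 (ι a) = 0 := by
  show conv Q (convPow Q 1) (ι a) = 0
  simp only [LinearMap.sub_apply, LinearMap.id_apply, piZero_one, piZero_ι, piZero_mul_ι, sub_zero, sub_self, mul_zero, zero_mul, add_zero, zero_add, mul_one, one_mul, mul_add, add_mul, conv_ι, cp1_one]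
lemma cp2_w2 : convPow Q 2 (ι a * ι b) = ι a * ι b + ι b * ι a := by
  show conv Q (convPow Q 1) _ = _
  simp only [LinearMap.sub_apply, LinearMap.id_apply, piZero_one, piZero_ι, piZero_mul_ι, sub_zero, sub_self, mul_zero, zero_mul, add_zero, zero_add, mul_one, one_mul, mul_add, add_mul, conv_w2, cp1_one, cp1_ι, cp1_w2]
lemma cp2_w3 : convPow Q 2 (ι a * ι b * ι c) =
    ι a * ι b * ι c + ι a * ι c * ι b + ι b * ι c * ι a
      + ι a * (ι b * ι c) + ι b * (ι a * ι c) + ι c * (ι a * ι b) := by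
  show conv Q (convPow Q 1) _ = _
  simp only [LinearMap.sub_apply, LinearMap.id_apply, piZero_one, piZero_ι, piZero_mul_ι, sub_zero, sub_self, mul_zero, zero_mul, add_zero, zero_add, mul_one, one_mul, mul_add, add_mul, conv_w3, cp1_one, cp1_ι, cp1_w2, cp1_w3]
lemma cp2_w4 : convPow Q 2 (ι a * ι b * ι c * ι d) =
    ι a * ι b * ι c * ι d + ι a * ι b * ι d * ι c + ι a * ι c * ι d * ι b
      + ι b * ι c * ι d * ι a
      + ι a * ι b * (ι c * ι d) + ι a * ι c * (ι b * ι d) + ι a * ι d * (ι b * ι c)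
      + ι b * ι c * (ι a * ι d) + ι b * ι d * (ι a * ι c) + ι c * ι d * (ι a * ι b)
      + ι a * (ι b * ι c * ι d) + ι b * (ι a * ι c * ι d) + ι c * (ι a * ι b * ι d)
      + ι d * (ι a * ι b * ι c) := by
  show conv Q (convPow Q 1) _ = _
  simp only [LinearMap.sub_apply, LinearMap.id_apply, piZero_one, piZero_ι, piZero_mul_ι, sub_zero, sub_self, mul_zero, zero_mul, add_zero, zero_add, mul_one, one_mul, mul_add, add_mul, conv_w4, cp1_one, cp1_ι, cp1_w2, cp1_w3, cp1_w4]

-- values of convPow Q 3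
lemma cp3_one : convPow Q 3 (1 : TensorAlgebra ℝ V) = 0 := by
  show conv Q (convPow Q 2) (1 : TensorAlgebra ℝ V) = 0
  simp only [LinearMap.sub_apply, LinearMap.id_apply, piZero_one, piZero_ι, piZero_mul_ι, sub_zero, sub_self, mul_zero, zero_mul, add_zero, zero_add, mul_one, one_mul, mul_add, add_mul, conv_one]
lemma cp3_ι : convPow Q 3 (ι a) = 0 := by
  show conv Q (convPow Q 2) (ι a) = 0
  simp only [LinearMap.sub_apply, LinearMap.id_apply, piZero_one, piZero_ι, piZero_mul_ι, sub_zero, sub_self, mul_zero, zero_mul, add_zero, zero_add, mul_one, one_mul, mul_add, add_mul, conv_ι, cp2_one]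
lemma cp3_w2 : convPow Q 3 (ι a * ι b) = 0 := by
  show conv Q (convPow Q 2) _ = _
  simp only [LinearMap.sub_apply, LinearMap.id_apply, piZero_one, piZero_ι, piZero_mul_ι, sub_zero, sub_self, mul_zero, zero_mul, add_zero, zero_add, mul_one, one_mul, mul_add, add_mul, conv_w2, cp2_one, cp2_ι]
lemma cp3_w3 : convPow Q 3 (ι a * ι b * ι c) =
    ι a * (ι b * ι c) + ι a * (ι c * ι b) + ι b * (ι a * ι c) + ι b * (ι c * ι a)
      + ι c * (ι a * ι b) + ι c * (ι b * ι a) := by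
  show conv Q (convPow Q 2) _ = _
  simp only [LinearMap.sub_apply, LinearMap.id_apply, piZero_one, piZero_ι, piZero_mul_ι, sub_zero, sub_self, mul_zero, zero_mul, add_zero, zero_add, mul_one, one_mul, mul_add, add_mul, conv_w3, cp2_one, cp2_ι, cp2_w2]
  abel
lemma cp3_w4 : convPow Q 3 (ι a * ι b * ι c * ι d) =
    ι a * ι b * (ι c * ι d) + ι a * ι b * (ι d * ι c)
      + ι a * ι c * (ι b * ι d) + ι a * ι c * (ι d * ι b)
      + ι a * ι d * (ι b * ι c) + ι a * ι d * (ι c * ι b)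
      + ι b * ι c * (ι a * ι d) + ι b * ι c * (ι d * ι a)
      + ι b * ι d * (ι a * ι c) + ι b * ι d * (ι c * ι a)
      + ι c * ι d * (ι a * ι b) + ι c * ι d * (ι b * ι a)
      + ι a * (ι b * ι c * ι d) + ι a * (ι b * ι d * ι c) + ι a * (ι c * ι d * ι b)
      + ι a * (ι b * (ι c * ι d)) + ι a * (ι c * (ι b * ι d)) + ι a * (ι d * (ι b * ι c))
      + ι b * (ι a * ι c * ι d) + ι b * (ι a * ι d * ι c) + ι b * (ι c * ι d * ι a)
      + ι b * (ι a * (ι c * ι d)) + ι b * (ι c * (ι a * ι d)) + ι b * (ι d * (ι a * ι c))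
      + ι c * (ι a * ι b * ι d) + ι c * (ι a * ι d * ι b) + ι c * (ι b * ι d * ι a)
      + ι c * (ι a * (ι b * ι d)) + ι c * (ι b * (ι a * ι d)) + ι c * (ι d * (ι a * ι b))
      + ι d * (ι a * ι b * ι c) + ι d * (ι a * ι c * ι b) + ι d * (ι b * ι c * ι a)
      + ι d * (ι a * (ι b * ι c)) + ι d * (ι b * (ι a * ι c)) + ι d * (ι c * (ι a * ι b)) := by
  show conv Q (convPow Q 2) _ = _
  simp only [LinearMap.sub_apply, LinearMap.id_apply, piZero_one, piZero_ι, piZero_mul_ι, sub_zero, sub_self, mul_zero, zero_mul, add_zero, zero_add, mul_one, one_mul, mul_add, add_mul, conv_w4, cp2_one, cp2_ι, cp2_w2, cp2_w3]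
  abel

-- value of convPow Q 4 on 4-letter words
lemma cp4_w4 : convPow Q 4 (ι a * ι b * ι c * ι d) =
    ι a * (ι b * (ι c * ι d)) + ι a * (ι b * (ι d * ι c))
      + ι a * (ι c * (ι b * ι d)) + ι a * (ι c * (ι d * ι b))
      + ι a * (ι d * (ι b * ι c)) + ι a * (ι d * (ι c * ι b))
      + ι b * (ι a * (ι c * ι d)) + ι b * (ι a * (ι d * ι c))
      + ι b * (ι c * (ι a * ι d)) + ι b * (ι c * (ι d * ι a))
      + ι b * (ι d * (ι a * ι c)) + ι b * (ι d * (ι c * ι a))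
      + ι c * (ι a * (ι b * ι d)) + ι c * (ι a * (ι d * ι b))
      + ι c * (ι b * (ι a * ι d)) + ι c * (ι b * (ι d * ι a))
      + ι c * (ι d * (ι a * ι b)) + ι c * (ι d * (ι b * ι a))
      + ι d * (ι a * (ι b * ι c)) + ι d * (ι a * (ι c * ι b))
      + ι d * (ι b * (ι a * ι c)) + ι d * (ι b * (ι c * ι a))
      + ι d * (ι c * (ι a * ι b)) + ι d * (ι c * (ι b * ι a)) := by
  show conv Q (convPow Q 3) _ = _
  simp only [LinearMap.sub_apply, LinearMap.id_apply, piZero_one, piZero_ι, piZero_mul_ι, sub_zero, sub_self, mul_zero, zero_mul, add_zero, zero_add, mul_one, one_mul, mul_add, add_mul, conv_w4, cp3_one, cp3_ι, cp3_w2, cp3_w3]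
  abel

-- vanishing of high convolution powers
lemma cpv_one (n : ℕ) : convPow Q (n+1) (1 : TensorAlgebra ℝ V) = 0 := by
  rw [convPow_succ, conv_one]
  simp only [LinearMap.sub_apply, LinearMap.id_apply, piZero_one, piZero_ι, piZero_mul_ι, sub_zero, sub_self, mul_zero, zero_mul, add_zero, zero_add, mul_one, one_mul, mul_add, add_mul]
lemma cpv_ι (n : ℕ) : convPow Q (n+1+1) (ι a) = 0 := by
  rw [convPow_succ, conv_ι, cpv_one]
  simp only [LinearMap.sub_apply, LinearMap.id_apply, piZero_one, piZero_ι, piZero_mul_ι, sub_zero, sub_self, mul_zero, zero_mul, add_zero, zero_add, mul_one, one_mul, mul_add, add_mul]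
lemma cpv_w2 (n : ℕ) : convPow Q (n+1+1+1) (ι a * ι b) = 0 := by
  rw [convPow_succ, conv_w2, cpv_one, cpv_ι, cpv_ι]
  simp only [LinearMap.sub_apply, LinearMap.id_apply, piZero_one, piZero_ι, piZero_mul_ι, sub_zero, sub_self, mul_zero, zero_mul, add_zero, zero_add, mul_one, one_mul, mul_add, add_mul]
lemma cpv_w3 (n : ℕ) : convPow Q (n+1+1+1+1) (ι a * ι b * ι c) = 0 := by
  rw [convPow_succ, conv_w3, cpv_one, cpv_ι, cpv_ι, cpv_ι, cpv_w2, cpv_w2, cpv_w2]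
  simp only [LinearMap.sub_apply, LinearMap.id_apply, piZero_one, piZero_ι, piZero_mul_ι, sub_zero, sub_self, mul_zero, zero_mul, add_zero, zero_add, mul_one, one_mul, mul_add, add_mul]
lemma cpv_w4 (n : ℕ) : convPow Q (n+1+1+1+1+1) (ι a * ι b * ι c * ι d) = 0 := by
  rw [convPow_succ, conv_w4, cpv_one, cpv_ι, cpv_ι, cpv_ι, cpv_ι,
    cpv_w2, cpv_w2, cpv_w2, cpv_w2, cpv_w2, cpv_w2, cpv_w3, cpv_w3, cpv_w3, cpv_w3]
  simp only [LinearMap.sub_apply, LinearMap.id_apply, piZero_one, piZero_ι, piZero_mul_ι, sub_zero, sub_self, mul_zero, zero_mul, add_zero, zero_add, mul_one, one_mul, mul_add, add_mul]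

end Aux

variable {d : ℕ}

/-- The canonical basis vectors ε₁,…,ε_d of ℝ^d. -/
noncomputable def eps (i : Fin d) : Fin d → ℝ := Pi.single i 1

/-- The letter εᵢ as an element of the tensor algebra. -/
noncomputable def lett (i : Fin d) : TensorAlgebra ℝ (Fin d → ℝ) :=
  TensorAlgebra.ι ℝ (eps i)

set_option maxHeartbeats 2000000

/-- The Eulerian idempotent on four-letter words:
e(εᵢεⱼε_kε_l) = (1/12)([εᵢ,[[εⱼ,ε_k],ε_l]] + [[εᵢ,εⱼ],[ε_k,ε_l]]
  + [[εᵢ,ε_k],[εⱼ,ε_l]] + [[εᵢ,[εⱼ,ε_k]],ε_l]), with [x,y] = xy − yx. -/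
theorem eulerian_four_letters (i j k l : Fin d) :
    eul (lett i * lett j * lett k * lett l)
      = (1 / 12 : ℝ) •
          (⁅lett i, ⁅⁅lett j, lett k⁆, lett l⁆⁆
            + ⁅⁅lett i, lett j⁆, ⁅lett k, lett l⁆⁆
            + ⁅⁅lett i, lett k⁆, ⁅lett j, lett l⁆⁆
            + ⁅⁅lett i, ⁅lett j, lett k⁆⁆, lett l⁆) := by
  simp only [lett]
  rw [eul, finsum_eq_sum_of_support_subset _
    (s := (Finset.range 4 : Finset ℕ)) ?hs]
  case hs =>
    intro n hn
    simp only [Function.mem_support, Finset.coe_range, Set.mem_Iio] at hn ⊢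
    by_contra hge
    push_neg at hge
    apply hn
    obtain ⟨m, rfl⟩ : ∃ m, n = m + 4 := ⟨n - 4, by omega⟩
    rw [show m + 4 + 1 = m+1+1+1+1+1 from rfl, cpv_w4, smul_zero]
  rw [Finset.sum_range_succ, Finset.sum_range_succ, Finset.sum_range_succ,
    Finset.sum_range_one]
  rw [show (0:ℕ)+1 = 1 from rfl, show (1:ℕ)+1 = 2 from rfl,
    show (2:ℕ)+1 = 3 from rfl, show (3:ℕ)+1 = 4 from rfl]
  rw [cp1_w4, cp2_w4, cp3_w4, cp4_w4]
  norm_num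
  simp only [Ring.lie_def, mul_sub, sub_mul, mul_add, add_mul, mul_assoc]
  module
end
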